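/- For each integer d ≥ 5 and each x ∈ (0,1], the limit as n → ∞ of the n-fold composition of |F_d| applied to x is bounded below by 1 − 3/(d−1) > 0. -/

import Mathlib

/-- Hyperbolic cotangent. -/
noncomputable def coth (x : ℝ) : ℝ := Real.cosh x / Real.sinh x

/-- Inverse hyperbolic tangent. -/
noncomputable def artanh (x : ℝ) : ℝ := (1 / 2) * Real.log ((1 + x) / (1 - x))

/-- The AKLT single-site transfer function `F_d`, extended by `F_d 0 = 0`. -/
noncomputable def F (D t : ℝ) : ℝ :=
  if t = 0 then 0 else -(1 / (D + 1)) * (D * coth (D * artanh t) - 1 / t)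

/-!
Write `t = w / (w + 2)`, i.e. `1 + w = exp (2 s)` with `s = artanh t`. Then
`(d + 1) |F_d t| = d coth (d s) - coth s` is a rational function of `w` and `(1 + w) ^ d`,
and the bound `|F_d t| ≥ (d - 1) t / (3 + (d - 1) t)` becomes a polynomial inequality in `w`
whose coefficients are all nonnegative: the `w ^ 3` terms cancel and the higher ones are
controlled by `12 (d choose j+1) ≤ (4 d - 10) (d choose j)` for `j ≥ 3`. Bernoulli's inequality
gives `|F_d t| < 1`.

The map `g t = a t / (3 + a t)`, `a = d - 1`, satisfies `g t ≥ min t (1 - 3 / a)`, so from its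
second point `x₁` on, the orbit stays above `min x₁ (1 - 3 / a)`. A limit `L < 1 - 3 / a` would
therefore be positive with `g L ≤ L`, which forces `L ≥ 1 - 3 / a`.
-/

section Binomial

open Finset

theorem Nat.twelve_mul_choose_succ_le (d j : ℕ) (hj : 3 ≤ j) :
    12 * d.choose (j + 1) ≤ (4 * d - 10) * d.choose j := by
  have hdj : 12 * (d - j) ≤ (4 * d - 10) * (j + 1) :=
    calc 12 * (d - j) ≤ (4 * d - 10) * 4 := by omega
      _ ≤ (4 * d - 10) * (j + 1) := Nat.mul_le_mul_left _ (by omega)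
  refine Nat.le_of_mul_le_mul_right ?_ (Nat.succ_pos j)
  calc 12 * d.choose (j + 1) * (j + 1) = d.choose j * (12 * (d - j)) := by
        rw [mul_assoc, Nat.choose_succ_right_eq]; ring
    _ ≤ d.choose j * ((4 * d - 10) * (j + 1)) := Nat.mul_le_mul_left _ hdj
    _ = (4 * d - 10) * d.choose j * (j + 1) := by ring

theorem one_add_pow_eq_sum_range_add_sum_Ico (w : ℝ) (d : ℕ) {k : ℕ} (hk : k ≤ d + 1) :
    (1 + w) ^ d = ∑ j ∈ range k, (d.choose j : ℝ) * w ^ j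
      + ∑ j ∈ Ico k (d + 1), (d.choose j : ℝ) * w ^ j := by
  rw [sum_range_add_sum_Ico _ hk, add_comm, add_pow]
  simp only [one_pow, mul_one, mul_comm]

theorem twelve_mul_sum_Ico_four_le {d : ℕ} (hd : 3 ≤ d) {w : ℝ} (hw : 0 ≤ w) :
    12 * ∑ j ∈ Ico 4 (d + 1), (d.choose j : ℝ) * w ^ j
      ≤ (4 * d - 10) * w * ∑ j ∈ Ico 3 (d + 1), (d.choose j : ℝ) * w ^ j := by
  have hcoef : ∀ j, 3 ≤ j → 12 * (d.choose (j + 1) : ℝ) ≤ (4 * d - 10) * d.choose j := by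
    intro j hj
    have h := Nat.cast_le (α := ℝ).2 (Nat.twelve_mul_choose_succ_le d j hj)
    push_cast [Nat.cast_sub (show 10 ≤ 4 * d by omega)] at h
    exact h
  have hshift := sum_Ico_add' (fun j => (d.choose j : ℝ) * w ^ j) 3 d 1
  calc 12 * ∑ j ∈ Ico 4 (d + 1), (d.choose j : ℝ) * w ^ j
      = ∑ j ∈ Ico 3 d, 12 * (d.choose (j + 1) : ℝ) * w ^ (j + 1) := by
        rw [← hshift, mul_sum]; simp only [mul_assoc]
    _ ≤ ∑ j ∈ Ico 3 d, (4 * d - 10) * w * ((d.choose j : ℝ) * w ^ j) := by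
        refine sum_le_sum fun j hj => ?_
        have := mul_le_mul_of_nonneg_right (hcoef j (mem_Ico.1 hj).1) (pow_nonneg hw (j + 1))
        linear_combination this
    _ ≤ ∑ j ∈ Ico 3 (d + 1), (4 * d - 10) * w * ((d.choose j : ℝ) * w ^ j) := by
        refine sum_le_sum_of_subset_of_nonneg (Ico_subset_Ico_right d.le_succ) fun j _ _ => ?_
        have : (3 : ℝ) ≤ d := by exact_mod_cast hd
        have : (0 : ℝ) ≤ 4 * d - 10 := by linarith
        positivity
    _ = (4 * d - 10) * w * ∑ j ∈ Ico 3 (d + 1), (d.choose j : ℝ) * w ^ j := (mul_sum ..).symm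

theorem two_mul_pow_sub_mul_le {d : ℕ} (hd : 3 ≤ d) {w : ℝ} (hw : 0 ≤ w) :
    2 * ((1 + w) ^ d - 1 - d * w) * ((d + 2) * w + 6)
      ≤ (d - 1) * (w + 6) * w * ((1 + w) ^ d - 1) := by
  have h3 := one_add_pow_eq_sum_range_add_sum_Ico w d (k := 3) (by omega)
  have h4 := one_add_pow_eq_sum_range_add_sum_Ico w d (k := 4) (by omega)
  simp only [sum_range_succ, sum_range_zero, Nat.choose_zero_right, Nat.choose_one_right,
    Nat.cast_one, pow_zero, pow_one, zero_add, mul_one] at h3 h4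
  have hC2 : 2 * (d.choose 2 : ℝ) = d * (d - 1) := by
    rw [Nat.cast_choose_two]; ring
  have hC3 : 3 * (d.choose 3 : ℝ) = d.choose 2 * (d - 2) := by
    have h := congrArg (Nat.cast (R := ℝ)) (Nat.choose_succ_right_eq d 2)
    push_cast [Nat.cast_sub (show 2 ≤ d by omega)] at h
    linarith
  have hsplit : (d - 1) * (w + 6) * w * ((1 + w) ^ d - 1)
        - 2 * ((1 + w) ^ d - 1 - d * w) * ((d + 2) * w + 6)
      = (d - 1) * w ^ 2 * ((1 + w) ^ d - 1 - d * w)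
        + ((4 * d - 10) * w * ∑ j ∈ Ico 3 (d + 1), (d.choose j : ℝ) * w ^ j
          - 12 * ∑ j ∈ Ico 4 (d + 1), (d.choose j : ℝ) * w ^ j) := by
    linear_combination
      (4 * d - 10) * w * h3 - 12 * h4 - (w ^ 3 + 6 * w ^ 2) * hC2 - 4 * w ^ 3 * hC3
  have hbern : 1 + d * w ≤ (1 + w) ^ d := one_add_mul_le_pow (by linarith) d
  have hd1 : (0 : ℝ) ≤ d - 1 := by
    have : (3 : ℝ) ≤ d := by exact_mod_cast hd
    linarith
  have := mul_nonneg (mul_nonneg hd1 (sq_nonneg w)) (sub_nonneg.2 hbern)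
  linarith [twelve_mul_sum_Ico_four_le hd hw]

end Binomial

open Set Filter Topology

theorem coth_eq (x : ℝ) : coth x = (Real.exp (2 * x) + 1) / (Real.exp (2 * x) - 1) := by
  have h2 : Real.exp (2 * x) = Real.exp x * Real.exp x := by rw [two_mul, Real.exp_add]
  rw [coth, Real.cosh_eq, Real.sinh_eq, h2, ← mul_div_mul_left _ _ (Real.exp_ne_zero x),
    Real.exp_neg]
  field_simp

/-- `d coth (d s) - coth s` where `1 + w = exp (2 s)`. -/
noncomputable def cothDiff (d : ℕ) (w : ℝ) : ℝ :=
  d * ((1 + w) ^ d + 1) / ((1 + w) ^ d - 1) - (w + 2) / w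

theorem F_div_add_two (d : ℕ) {w : ℝ} (hw : 0 < w) :
    F d (w / (w + 2)) = -(cothDiff d w / (d + 1)) := by
  have hart : 2 * artanh (w / (w + 2)) = Real.log (1 + w) := by
    rw [artanh, ← mul_assoc, mul_one_div_cancel two_ne_zero, one_mul]
    congr 1
    field_simp
    ring
  have hexp : Real.exp (2 * (d * artanh (w / (w + 2)))) = (1 + w) ^ d := by
    rw [mul_left_comm, hart, Real.exp_nat_mul, Real.exp_log (by linarith)]
  rw [F, if_neg (by positivity), coth_eq, hexp, cothDiff]
  field_simp

theorem one_add_pow_sub_one_pos {d : ℕ} (hd : d ≠ 0) {w : ℝ} (hw : 0 < w) :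
    0 < (1 + w) ^ d - 1 := by
  have := one_lt_pow₀ (by linarith : 1 < 1 + w) hd
  linarith

theorem div_le_cothDiff {d : ℕ} (hd : 3 ≤ d) {w : ℝ} (hw : 0 < w) :
    ((d : ℝ) ^ 2 - 1) * w / ((d + 2) * w + 6) ≤ cothDiff d w := by
  have hv := one_add_pow_sub_one_pos (by omega : d ≠ 0) hw
  rw [cothDiff, div_sub_div _ _ hv.ne' hw.ne', div_le_div_iff₀ (by positivity) (by positivity)]
  linear_combination two_mul_pow_sub_mul_le hd hw.le

theorem cothDiff_le {d : ℕ} (hd : d ≠ 0) {w : ℝ} (hw : 0 < w) : cothDiff d w ≤ d - 1 := by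
  have hv := one_add_pow_sub_one_pos hd hw
  rw [cothDiff, div_sub_div _ _ hv.ne' hw.ne', div_le_iff₀ (by positivity)]
  linear_combination 2 * one_add_mul_le_pow (by linarith : (-2 : ℝ) ≤ w) d

theorem exists_div_add_two_eq {t : ℝ} (h0 : 0 < t) (h1 : t < 1) :
    ∃ w, 0 < w ∧ w / (w + 2) = t := by
  refine ⟨2 * t / (1 - t), div_pos (by linarith) (by linarith), ?_⟩
  have : 1 - t ≠ 0 := by linarith
  field_simp
  ring

theorem cothDiff_pos {d : ℕ} (hd : 3 ≤ d) {w : ℝ} (hw : 0 < w) : 0 < cothDiff d w := by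
  refine lt_of_lt_of_le ?_ (div_le_cothDiff hd hw)
  have : (3 : ℝ) ≤ d := by exact_mod_cast hd
  have : (0 : ℝ) < d ^ 2 - 1 := by nlinarith
  positivity

theorem abs_F_div_add_two {d : ℕ} (hd : 3 ≤ d) {w : ℝ} (hw : 0 < w) :
    |F d (w / (w + 2))| = cothDiff d w / (d + 1) := by
  have := cothDiff_pos hd hw
  rw [F_div_add_two d hw, abs_neg, abs_of_pos (by positivity)]

theorem mul_div_le_abs_F {d : ℕ} (hd : 3 ≤ d) {t : ℝ} (h0 : 0 < t) (h1 : t < 1) :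
    (d - 1) * t / (3 + (d - 1) * t) ≤ |F d t| := by
  obtain ⟨w, hw, rfl⟩ := exists_div_add_two_eq h0 h1
  have : (3 : ℝ) ≤ d := by exact_mod_cast hd
  have : (d + 2) * w + 6 ≠ 0 := by positivity
  have key : (d - 1) * (w / (w + 2)) / (3 + (d - 1) * (w / (w + 2)))
      = ((d : ℝ) ^ 2 - 1) * w / ((d + 2) * w + 6) / (d + 1) := by
    have hd1 : (0 : ℝ) < d - 1 := by linarith
    rw [div_div, div_eq_div_iff (by positivity) (by positivity)]
    field_simp
    ring
  rw [abs_F_div_add_two hd hw, key]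
  gcongr
  exact div_le_cothDiff hd hw

/-- From the junk values `log 0 = 0` and `x / 0 = 0`; the bound `mul_div_le_abs_F` fails here. -/
theorem F_one (D : ℝ) : F D 1 = 1 / (D + 1) := by
  have h : artanh 1 = 0 := by simp [artanh]
  simp [F, h, coth]

theorem abs_F_mem_Ioo {d : ℕ} (hd : 3 ≤ d) {t : ℝ} (ht : t ∈ Ioc (0 : ℝ) 1) :
    |F d t| ∈ Ioo 0 1 := by
  have : (3 : ℝ) ≤ d := by exact_mod_cast hd
  obtain ⟨h0, h1⟩ := ht
  rcases h1.lt_or_eq with h1 | rfl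
  · obtain ⟨w, hw, rfl⟩ := exists_div_add_two_eq h0 h1
    rw [abs_F_div_add_two hd hw]
    exact ⟨div_pos (cothDiff_pos hd hw) (by positivity),
      (div_lt_one (by positivity)).2 ((cothDiff_le (by omega) hw).trans_lt (by linarith))⟩
  · rw [F_one, abs_of_pos (by positivity)]
    exact ⟨by positivity, by rw [div_lt_one (by linarith)]; linarith⟩

theorem min_le_of_forall_min_le_succ {α : Type*} [LinearOrder α] {z : ℕ → α} {c : α}
    (h : ∀ n, min (z n) c ≤ z (n + 1)) (n : ℕ) : min (z 0) c ≤ z n := by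
  induction n with
  | zero => exact min_le_left _ _
  | succ n ih => exact (le_min ih (min_le_right _ _)).trans (h n)

theorem min_le_mul_div_three_add_mul {a t : ℝ} (ha : 0 < a) (ht : 0 < t) :
    min t (1 - 3 / a) ≤ a * t / (3 + a * t) := by
  rw [le_div_iff₀ (by positivity)]
  rcases le_total t (1 - 3 / a) with h | h
  · rw [min_eq_left h]
    rw [le_sub_comm, div_le_iff₀ ha] at h
    nlinarith
  · have hexp : (1 - 3 / a) * (3 + a * t) = a * t + 3 * (1 - 3 / a - t) := by
      field_simp
      ring
    rw [min_eq_right h, hexp]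
    linarith

theorem one_sub_three_div_le_of_mul_div_le {a t : ℝ} (ha : 0 < a) (ht : 0 < t)
    (h : a * t / (3 + a * t) ≤ t) : 1 - 3 / a ≤ t := by
  rw [div_le_iff₀ (by positivity)] at h
  have h' : a ≤ 3 + a * t := le_of_mul_le_mul_left (by linarith) ht
  rw [sub_le_comm, le_div_iff₀ ha]
  linarith

theorem one_sub_three_div_le_of_tendsto {a : ℝ} (ha : 0 < a) {z : ℕ → ℝ}
    (hz : ∀ n, 0 < z n) (hstep : ∀ n, a * z n / (3 + a * z n) ≤ z (n + 1)) {L : ℝ}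
    (hL : Tendsto z atTop (𝓝 L)) : 1 - 3 / a ≤ L := by
  have hmin := min_le_of_forall_min_le_succ fun n =>
    (min_le_mul_div_three_add_mul ha (hz n)).trans (hstep n)
  rcases min_le_iff.1 (ge_of_tendsto' hL hmin) with h | h
  · have hL0 : 0 < L := (hz 0).trans_le h
    have hlim : Tendsto (fun n => a * z n / (3 + a * z n)) atTop (𝓝 (a * L / (3 + a * L))) :=
      (hL.const_mul a).div ((hL.const_mul a).const_add 3) (by positivity)
    exact one_sub_three_div_le_of_mul_div_le ha hL0
      (le_of_tendsto_of_tendsto' hlim (hL.comp (tendsto_add_atTop_nat 1)) hstep)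
  · exact h

theorem stmt_12 (d : ℕ) (hd : 5 ≤ d) (x : ℝ) (hx : x ∈ Set.Ioc (0 : ℝ) 1) :
    (0 < 1 - 3 / ((d : ℝ) - 1)) ∧
    ∀ L : ℝ, Filter.Tendsto (fun n => (fun y => |F (d : ℝ) y|)^[n] x)
        Filter.atTop (nhds L) → 1 - 3 / ((d : ℝ) - 1) ≤ L := by
  have hd' : (5 : ℝ) ≤ d := by exact_mod_cast hd
  refine ⟨by rw [sub_pos, div_lt_one (by linarith)]; linarith, fun L hL => ?_⟩
  set T : ℝ → ℝ := fun y => |F d y|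
  have hmaps : MapsTo T (Ioo 0 1) (Ioo 0 1) := fun t ht =>
    abs_F_mem_Ioo (by omega) (Ioo_subset_Ioc_self ht)
  have hz : ∀ n, T^[n] (T x) ∈ Ioo 0 1 := fun n => hmaps.iterate n (abs_F_mem_Ioo (by omega) hx)
  refine one_sub_three_div_le_of_tendsto (z := fun n => T^[n] (T x)) (by linarith)
    (fun n => (hz n).1) (fun n => ?_) ?_
  · rw [Function.iterate_succ_apply']
    exact mul_div_le_abs_F (by omega) (hz n).1 (hz n).2
  · simpa only [Function.comp_def, Function.iterate_succ_apply] using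
      hL.comp (tendsto_add_atTop_nat 1)
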